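/- Let x* be a feasible solution of the s-t-path LP and p a probability distribution on 𝒮 with x* = Σ_{S∈𝒮} p_S χ^S such that p_S > 0 for at most n² trees S. Let 0 < ε ≤ 1 and set p'_S := (ε/n³)·⌊(n³/ε)·p_S⌋ for each S. Then Σ_{S∈𝒮}(p_S − p'_S) ≤ ε/n, and the vector x := (Σ_{S∈𝒮} p'_S χ^S)/(Σ_{S∈𝒮} p'_S) satisfies x(δ(s)) = x(δ(t)) = 1 and x*(F) − ε ≤ x(F) ≤ x*(F) + ε for all F ⊆ E. -/

import Mathlib

open Finset SimpleGraph

attribute [local instance 10] Classical.propDecidable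

noncomputable section

namespace STT

variable {V : Type*} [Fintype V] [DecidableEq V]

/-- `δ(U)`: the set of edges of the complete graph on `V` with exactly one endpoint in `U`. -/
def cutOf (U : Finset V) : Finset (Sym2 V) :=
  Finset.univ.filter fun e => ∃ u v : V, e = s(u, v) ∧ u ∈ U ∧ v ∉ U

/-- `E[U]`: the set of edges with both endpoints in `U`. -/
def within (U : Finset V) : Finset (Sym2 V) :=
  Finset.univ.filter fun e => ¬e.IsDiag ∧ ∀ v ∈ e, v ∈ U

/-- `x(F) := ∑_{e ∈ F} x_e`. -/
def xval (x : Sym2 V → ℝ) (F : Finset (Sym2 V)) : ℝ := ∑ e ∈ F, x e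

/-- characteristic vector `χ^S` of an edge set `S`. -/
def chi (S : Finset (Sym2 V)) : Sym2 V → ℝ := fun e => if e ∈ S then 1 else 0

/-- `S` is the edge set of a spanning tree of the complete graph on `V`. -/
def IsSpanningTree (S : Finset (Sym2 V)) : Prop :=
  (∀ e ∈ S, ¬e.IsDiag) ∧
    (SimpleGraph.fromEdgeSet (↑S : Set (Sym2 V))).Connected ∧
    S.card = Fintype.card V - 1

/-- the induced subgraph `(V,S)[M]` is connected. -/
def InducedConn (S : Finset (Sym2 V)) (M : Finset V) : Prop :=
  (SimpleGraph.induce (↑M : Set V) (SimpleGraph.fromEdgeSet (↑S : Set (Sym2 V)))).Connected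

/-- `x` is a feasible solution of the `s`-`t`-path LP. -/
def LPFeasible (s t : V) (x : Sym2 V → ℝ) : Prop :=
  (∀ e : Sym2 V, ¬e.IsDiag → 0 ≤ x e) ∧
    (∀ e : Sym2 V, e.IsDiag → x e = 0) ∧
    (∀ U : Finset V, U.Nonempty → U ≠ Finset.univ → Even (U ∩ {s, t}).card →
      2 ≤ xval x (cutOf U)) ∧
    (∀ U : Finset V, U.Nonempty → U ≠ Finset.univ → ¬Even (U ∩ {s, t}).card →
      1 ≤ xval x (cutOf U)) ∧
    (∀ v : V, v ≠ s → v ≠ t → xval x (cutOf {v}) = 2) ∧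
    xval x (cutOf {s}) = 1 ∧ xval x (cutOf {t}) = 1

/-- `C` is a narrow cut w.r.t. `x`. -/
def IsNarrowCut (x : Sym2 V → ℝ) (C : Finset (Sym2 V)) : Prop :=
  ∃ U : Finset V, U.Nonempty ∧ U ≠ Finset.univ ∧ C = cutOf U ∧ xval x C < 2

/-- property (★) for `x` w.r.t. `x*` and `ε`. -/
def StarProp (s t : V) (xstar : Sym2 V → ℝ) (ε : ℝ) (x : Sym2 V → ℝ) : Prop :=
  xval x (cutOf {s}) = 1 ∧ xval x (cutOf {t}) = 1 ∧
    ∀ F : Finset (Sym2 V), xval xstar F - ε ≤ xval x F ∧ xval x F ≤ xval xstar F + ε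

/-- `θ_i := ⌈r (2 − x*(C_i) − ε)⌉` where `C_i = δ(U_i)`. -/
def theta (r : ℕ) (xstar : Sym2 V → ℝ) (ε : ℝ) (U : ℕ → Finset V) (i : ℕ) : ℤ :=
  ⌈(r : ℝ) * (2 - xval xstar (cutOf (U i)) - ε)⌉

/-- `c(x) = ∑_{e={u,v}∈E} c(u,v) x_e` (each unordered pair counted once). -/
def cost (c : V → V → ℝ) (x : Sym2 V → ℝ) : ℝ :=
  (∑ u : V, ∑ v : V, c u v * x s(u, v)) / 2

/-- the finset of all narrow cuts. -/
def NarrowCuts (xstar : Sym2 V → ℝ) : Finset (Finset (Sym2 V)) :=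
  Finset.univ.filter fun C => IsNarrowCut xstar C

/-- degree of `v` in the edge set `S`. -/
def degIn (S : Finset (Sym2 V)) (v : V) : ℕ := (S.filter fun e => v ∈ e).card

/-- `T_S`: vertices whose degree in `S` has the wrong parity. -/
def wrongParity (s t : V) (S : Finset (Sym2 V)) : Finset V :=
  Finset.univ.filter fun v =>
    if v = s ∨ v = t then Even (degIn S v) else ¬Even (degIn S v)

/-- `P` is the edge set of the (unique) `a`-`b`-path in `S`. -/
def IsPathEdges (a b : V) (S P : Finset (Sym2 V)) : Prop :=
  ∃ w : (SimpleGraph.fromEdgeSet (↑S : Set (Sym2 V))).Walk a b,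
    w.IsPath ∧ P = w.edges.toFinset

/-- the parity-correction vector `z^S` (for the `s`-`t`-path edge set `IS ⊆ S`). -/
def zvec (xstar : Sym2 V → ℝ) (β ε γS : ℝ) (eC : Finset (Sym2 V) → Sym2 V)
    (S IS : Finset (Sym2 V)) : Sym2 V → ℝ := fun g =>
  (1 - 2 * β) * γS * chi IS g +
    ∑ C ∈ (NarrowCuts xstar).filter (fun C => Even (S ∩ C).card),
      max 0 (β * (2 - xval xstar C - ε) - (1 - 2 * β) * γS) * chi {eC C} g

/-- the vector `y^S`. -/
def yvec (xstar : Sym2 V → ℝ) (β ε γS : ℝ) (eC : Finset (Sym2 V) → Sym2 V)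
    (S IS : Finset (Sym2 V)) : Sym2 V → ℝ := fun g =>
  β * (1 + ε) * xstar g + (1 - 2 * β) * chi (S \ IS) g + zvec xstar β ε γS eC S IS g

/-- the benefit `b_{S,C}`. -/
def benefit (xstar : Sym2 V → ℝ) (β ε γS : ℝ) (S C : Finset (Sym2 V)) : ℝ :=
  if (S ∩ C).card = 1 then 1 - γS
  else if Even (S ∩ C).card then min (β * (2 - xval xstar C - ε) / (1 - 2 * β)) γS
  else 0

theorem stmt16 {V : Type*} [Fintype V] [DecidableEq V]
    (hV : 2 ≤ Fintype.card V) (s t : V) (hst : s ≠ t)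
    (xstar : Sym2 V → ℝ) (hfeas : LPFeasible s t xstar)
    (p : Finset (Sym2 V) → ℝ) (hp0 : ∀ S : Finset (Sym2 V), 0 ≤ p S)
    (hp1 : ∑ S : Finset (Sym2 V), p S = 1)
    (hpsupp : ∀ S : Finset (Sym2 V), p S ≠ 0 → IsSpanningTree S)
    (hsuppcard :
      (Finset.univ.filter (fun S : Finset (Sym2 V) => p S ≠ 0)).card ≤ Fintype.card V ^ 2)
    (hxs : ∀ e : Sym2 V, xstar e = ∑ S : Finset (Sym2 V), p S * chi S e)
    (ε : ℝ) (hε0 : 0 < ε) (hε1 : ε ≤ 1)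
    (p' : Finset (Sym2 V) → ℝ)
    (hp' : ∀ S : Finset (Sym2 V),
      p' S = ε / (Fintype.card V : ℝ) ^ 3 * ⌊(Fintype.card V : ℝ) ^ 3 / ε * p S⌋) :
    (∑ S : Finset (Sym2 V), (p S - p' S)) ≤ ε / (Fintype.card V : ℝ) ∧
    StarProp s t xstar ε
      (fun e => (∑ S : Finset (Sym2 V), p' S * chi S e) / (∑ S : Finset (Sym2 V), p' S)) := by
  classical
  obtain ⟨hx0, hxdiag, hcut2, hcut1, hdeg2, hds, hdt⟩ := hfeas
  set N : ℝ := (Fintype.card V : ℝ) with hNdef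
  have hNpos : (0:ℝ) < N := by
    rw [hNdef]
    have : (0:ℕ) < Fintype.card V := by omega
    exact_mod_cast this
  have hN2 : (2:ℝ) ≤ N := by rw [hNdef]; exact_mod_cast hV
  have hN3 : (0:ℝ) < N ^ 3 := by positivity
  have hεN3 : (0:ℝ) < ε / N ^ 3 := by positivity
  -- basic facts about p'
  have hp'le : ∀ S, p' S ≤ p S := by
    intro S
    rw [hp' S]
    have h1 : (⌊N ^ 3 / ε * p S⌋ : ℝ) ≤ N ^ 3 / ε * p S := Int.floor_le _
    have : ε / N ^ 3 * (N ^ 3 / ε * p S) = p S := by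
      field_simp
    nlinarith
  have hp'0 : ∀ S, 0 ≤ p' S := by
    intro S
    rw [hp' S]
    have h1 : (0:ℝ) ≤ N ^ 3 / ε * p S := mul_nonneg (by positivity) (hp0 S)
    have h2 : (0:ℤ) ≤ ⌊N ^ 3 / ε * p S⌋ := Int.floor_nonneg.mpr h1
    have h2' : (0:ℝ) ≤ (⌊N ^ 3 / ε * p S⌋ : ℝ) := by exact_mod_cast h2
    positivity
  have hgap : ∀ S, p S - p' S ≤ ε / N ^ 3 := by
    intro S
    rw [hp' S]
    have h1 : N ^ 3 / ε * p S - 1 < (⌊N ^ 3 / ε * p S⌋ : ℝ) := Int.sub_one_lt_floor _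
    have : ε / N ^ 3 * (N ^ 3 / ε * p S - 1) = p S - ε / N ^ 3 := by
      field_simp
    nlinarith
  have hzero : ∀ S, p S = 0 → p' S = 0 := by
    intro S h
    rw [hp' S, h]
    simp
  -- part 1
  set D : Finset (Finset (Sym2 V)) := Finset.univ.filter (fun S => p S ≠ 0) with hD
  have hpart1 : (∑ S : Finset (Sym2 V), (p S - p' S)) ≤ ε / N := by
    have heq : ∑ S ∈ D, (p S - p' S) = ∑ S : Finset (Sym2 V), (p S - p' S) := by
      refine Finset.sum_subset (Finset.filter_subset _ _) ?_
      intro S _ hS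
      have hpS : p S = 0 := by
        by_contra h
        exact hS (Finset.mem_filter.mpr ⟨Finset.mem_univ S, h⟩)
      rw [hpS, hzero S hpS]; ring
    have hle : ∑ S ∈ D, (p S - p' S) ≤ D.card • (ε / N ^ 3) :=
      Finset.sum_le_card_nsmul D _ _ (fun S _ => hgap S)
    have hcard : (D.card : ℝ) ≤ N ^ 2 := by
      rw [hNdef]
      exact_mod_cast hsuppcard
    calc ∑ S : Finset (Sym2 V), (p S - p' S) = ∑ S ∈ D, (p S - p' S) := heq.symm
      _ ≤ D.card • (ε / N ^ 3) := hle
      _ = (D.card : ℝ) * (ε / N ^ 3) := by simp [nsmul_eq_mul]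
      _ ≤ N ^ 2 * (ε / N ^ 3) := by gcongr
      _ = ε / N := by field_simp
  -- counting lemma
  have hchi : ∀ (S F : Finset (Sym2 V)), (∑ e ∈ F, chi S e) = ((F ∩ S).card : ℝ) := by
    intro S F
    simp [chi, Finset.sum_boole, Finset.filter_mem_eq_inter]
  set σ : ℝ := ∑ S : Finset (Sym2 V), p' S with hσdef
  have hσ1 : σ ≤ 1 := by
    rw [hσdef, ← hp1]
    exact Finset.sum_le_sum (fun S _ => hp'le S)
  have hσlow : (1 - σ) * N ≤ ε := by
    have h1 : 1 - σ ≤ ε / N := by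
      have : (∑ S : Finset (Sym2 V), (p S - p' S)) = 1 - σ := by
        rw [Finset.sum_sub_distrib, hp1, hσdef]
      linarith [hpart1, this]
    calc (1 - σ) * N ≤ (ε / N) * N := by
          exact mul_le_mul_of_nonneg_right h1 (le_of_lt hNpos)
      _ = ε := by field_simp
  have hσpos : (0:ℝ) < σ := by nlinarith
  -- values of x and xstar on edge sets
  have hxvalx : ∀ F : Finset (Sym2 V),
      xval (fun e => (∑ S : Finset (Sym2 V), p' S * chi S e) / σ) F
        = (∑ S : Finset (Sym2 V), p' S * ((F ∩ S).card : ℝ)) / σ := by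
    intro F
    unfold xval
    rw [← Finset.sum_div]
    congr 1
    rw [Finset.sum_comm]
    refine Finset.sum_congr rfl fun S _ => ?_
    rw [← Finset.mul_sum, hchi]
  have hxvalstar : ∀ F : Finset (Sym2 V),
      xval xstar F = ∑ S : Finset (Sym2 V), p S * ((F ∩ S).card : ℝ) := by
    intro F
    unfold xval
    calc ∑ e ∈ F, xstar e = ∑ e ∈ F, ∑ S : Finset (Sym2 V), p S * chi S e := by
          exact Finset.sum_congr rfl fun e _ => hxs e
      _ = ∑ S : Finset (Sym2 V), ∑ e ∈ F, p S * chi S e := Finset.sum_comm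
      _ = ∑ S : Finset (Sym2 V), p S * ((F ∩ S).card : ℝ) := by
          refine Finset.sum_congr rfl fun S _ => ?_
          rw [← Finset.mul_sum, hchi]
  -- card bound on trees
  have hcardS : ∀ S : Finset (Sym2 V), p S ≠ 0 → ∀ F : Finset (Sym2 V),
      ((F ∩ S).card : ℝ) ≤ N - 1 := by
    intro S hS F
    have h1 : (F ∩ S).card ≤ S.card := Finset.card_le_card (Finset.inter_subset_right)
    have h2 : S.card = Fintype.card V - 1 := (hpsupp S hS).2.2
    have h3 : ((Fintype.card V - 1 : ℕ) : ℝ) = N - 1 := by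
      rw [hNdef]
      have : 1 ≤ Fintype.card V := by omega
      push_cast [this]
      ring
    calc ((F ∩ S).card : ℝ) ≤ ((S.card : ℕ) : ℝ) := by exact_mod_cast h1
      _ = N - 1 := by rw [h2, h3]
  -- bounds on the sums
  have hAnn : ∀ F : Finset (Sym2 V),
      (0:ℝ) ≤ ∑ S : Finset (Sym2 V), p S * ((F ∩ S).card : ℝ) :=
    fun F => Finset.sum_nonneg fun S _ => mul_nonneg (hp0 S) (Nat.cast_nonneg _)
  have hAub : ∀ F : Finset (Sym2 V),
      (∑ S : Finset (Sym2 V), p S * ((F ∩ S).card : ℝ)) ≤ N - 1 := by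
    intro F
    calc (∑ S : Finset (Sym2 V), p S * ((F ∩ S).card : ℝ))
        ≤ ∑ S : Finset (Sym2 V), p S * (N - 1) := by
          refine Finset.sum_le_sum fun S _ => ?_
          by_cases h : p S = 0
          · simp [h]
          · exact mul_le_mul_of_nonneg_left (hcardS S h F) (hp0 S)
      _ = N - 1 := by rw [← Finset.sum_mul, hp1, one_mul]
  have hBnn : ∀ F : Finset (Sym2 V),
      (0:ℝ) ≤ ∑ S : Finset (Sym2 V), p' S * ((F ∩ S).card : ℝ) :=
    fun F => Finset.sum_nonneg fun S _ => mul_nonneg (hp'0 S) (Nat.cast_nonneg _)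
  have hBleA : ∀ F : Finset (Sym2 V),
      (∑ S : Finset (Sym2 V), p' S * ((F ∩ S).card : ℝ))
        ≤ ∑ S : Finset (Sym2 V), p S * ((F ∩ S).card : ℝ) :=
    fun F => Finset.sum_le_sum fun S _ =>
      mul_le_mul_of_nonneg_right (hp'le S) (Nat.cast_nonneg _)
  have hABgap : ∀ F : Finset (Sym2 V),
      (∑ S : Finset (Sym2 V), p S * ((F ∩ S).card : ℝ))
        - (∑ S : Finset (Sym2 V), p' S * ((F ∩ S).card : ℝ)) ≤ ε := by
    intro F
    rw [← Finset.sum_sub_distrib]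
    have h1 : ∑ S : Finset (Sym2 V), (p S * ((F ∩ S).card : ℝ) - p' S * ((F ∩ S).card : ℝ))
        ≤ ∑ S : Finset (Sym2 V), (p S - p' S) * (N - 1) := by
      refine Finset.sum_le_sum fun S _ => ?_
      by_cases h : p S = 0
      · simp [h, hzero S h]
      · have := hcardS S h F
        have h2 : 0 ≤ p S - p' S := by linarith [hp'le S]
        nlinarith [(Nat.cast_nonneg (F ∩ S).card : (0:ℝ) ≤ ((F ∩ S).card : ℝ))]
    have h2 : ∑ S : Finset (Sym2 V), (p S - p' S) * (N - 1)
        = (∑ S : Finset (Sym2 V), (p S - p' S)) * (N - 1) := (Finset.sum_mul _ _ _).symm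
    have h3 : (∑ S : Finset (Sym2 V), (p S - p' S)) * (N - 1) ≤ (ε / N) * (N - 1) := by
      have hnn : (0:ℝ) ≤ N - 1 := by linarith
      exact mul_le_mul_of_nonneg_right hpart1 hnn
    have h4 : (ε / N) * (N - 1) ≤ ε := by
      rw [div_mul_eq_mul_div, div_le_iff₀ hNpos]
      nlinarith
    linarith
  -- degree-one lemma at s and t
  have hone : ∀ v : V, xval xstar (cutOf {v}) = 1 →
      ∀ S : Finset (Sym2 V), p S ≠ 0 → ((cutOf {v} ∩ S).card : ℝ) = 1 := by
    intro v hv S hS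
    have hc1 : ∀ T : Finset (Sym2 V), p T ≠ 0 → 1 ≤ (cutOf {v} ∩ T).card := by
      intro T hT
      obtain ⟨hdiag, hconn, hcardT⟩ := hpsupp T hT
      obtain ⟨w, hw⟩ := Fintype.exists_ne_of_one_lt_card (by omega) v
      obtain ⟨wk⟩ := hconn.preconnected v w
      have hnil : ¬ wk.Nil := SimpleGraph.Walk.not_nil_of_ne (hw.symm)
      have hadj := wk.adj_snd hnil
      rw [SimpleGraph.fromEdgeSet_adj] at hadj
      have hmem : s(v, wk.getVert 1) ∈ cutOf {v} ∩ T := by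
        rw [Finset.mem_inter]
        constructor
        · unfold cutOf
          rw [Finset.mem_filter]
          refine ⟨Finset.mem_univ _, v, wk.getVert 1, rfl, Finset.mem_singleton_self v, ?_⟩
          simp [hadj.2.symm]
        · simpa using hadj.1
      exact Finset.card_pos.mpr ⟨_, hmem⟩
    have hsum0 : ∑ T : Finset (Sym2 V), p T * (((cutOf {v} ∩ T).card : ℝ) - 1) = 0 := by
      have e1 : ∑ T : Finset (Sym2 V), p T * (((cutOf {v} ∩ T).card : ℝ) - 1)
          = (∑ T : Finset (Sym2 V), p T * ((cutOf {v} ∩ T).card : ℝ))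
            - ∑ T : Finset (Sym2 V), p T := by
        rw [← Finset.sum_sub_distrib]
        exact Finset.sum_congr rfl fun T _ => by ring
      rw [e1, ← hxvalstar, hv, hp1]
      ring
    have hnn : ∀ T ∈ (Finset.univ : Finset (Finset (Sym2 V))),
        0 ≤ p T * (((cutOf {v} ∩ T).card : ℝ) - 1) := by
      intro T _
      by_cases h : p T = 0
      · simp [h]
      · have h1 : (1:ℝ) ≤ ((cutOf {v} ∩ T).card : ℝ) := by exact_mod_cast hc1 T h
        have := hp0 T
        nlinarith
    have := (Finset.sum_eq_zero_iff_of_nonneg hnn).mp hsum0 S (Finset.mem_univ S)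
    have hps : 0 < p S := lt_of_le_of_ne (hp0 S) (Ne.symm hS)
    have : ((cutOf {v} ∩ S).card : ℝ) - 1 = 0 := by
      rcases mul_eq_zero.mp this with h | h
      · exact absurd h hS
      · exact h
    linarith
  have hcutone : ∀ v : V, xval xstar (cutOf {v}) = 1 →
      xval (fun e => (∑ S : Finset (Sym2 V), p' S * chi S e) / σ) (cutOf {v}) = 1 := by
    intro v hv
    rw [hxvalx]
    have : (∑ S : Finset (Sym2 V), p' S * ((cutOf {v} ∩ S).card : ℝ)) = σ := by
      rw [hσdef]
      refine Finset.sum_congr rfl fun S _ => ?_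
      by_cases h : p S = 0
      · rw [hzero S h]; ring
      · rw [hone v hv S h, mul_one]
    rw [this, div_self (ne_of_gt hσpos)]
  refine ⟨hpart1, hcutone s hds, hcutone t hdt, ?_⟩
  intro F
  rw [hxvalx, hxvalstar]
  set A : ℝ := ∑ S : Finset (Sym2 V), p S * ((F ∩ S).card : ℝ) with hAdef
  set B : ℝ := ∑ S : Finset (Sym2 V), p' S * ((F ∩ S).card : ℝ) with hBdef
  have h1 : A - ε ≤ B / σ := by
    have hB : B ≤ B / σ := by
      rw [le_div_iff₀ hσpos]
      nlinarith [hBnn F]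
    have := hABgap F
    rw [← hAdef, ← hBdef] at this
    linarith [hBnn F]
  have h2 : B / σ ≤ A + ε := by
    rw [div_le_iff₀ hσpos]
    have hBA := hBleA F
    rw [← hAdef, ← hBdef] at hBA
    have hA1 := hAub F
    rw [← hAdef] at hA1
    have hA0 := hAnn F
    rw [← hAdef] at hA0
    have h1σ : (0:ℝ) ≤ 1 - σ := by linarith
    have hq2 : A * (1 - σ) ≤ (N - 1) * (1 - σ) := mul_le_mul_of_nonneg_right hA1 h1σ
    have hq5 : ε * (1 - σ) ≤ 1 * (1 - σ) := mul_le_mul_of_nonneg_right hε1 h1σ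
    have hexp : (A + ε) * σ = A + ε - A * (1 - σ) - ε * (1 - σ) := by ring
    have hq6 : (N - 1) * (1 - σ) = (1 - σ) * N - (1 - σ) := by ring
    linarith [hexp, hq2, hq5, hq6, hσlow, hBA]
  exact ⟨h1, h2⟩


end STT

end
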